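/- Let σ, γ > 0, t ≥ 0 and a > 0. Then ∫_ℝ [1 − 2Φ(−(t − 2σγ^{1/2} g)/(2a))] · min(1, φ_{σ²γ}(t − σ√γ g)/φ_{σ²γ}(σ√γ g)) φ(g) dg = 0, where φ and Φ are the standard Gaussian density and cumulative distribution function. -/

import Mathlib

/-!
Write `c = σ√γ`, so that `stdG g = c · φ_{c²}(c g)` and the integrand becomes
`c · (1 - 2Φ(-(t - 2cg)/(2a))) · min (φ_{c²}(cg)) (φ_{c²}(t - cg))`.
The reflection `g ↦ t/c - g` swaps the two arguments of the `min` and negates the argument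
of `Φ`; since `1 - 2Φ(-s) = -(1 - 2Φ(s))`, the integrand is odd about `t/(2c)` and its
integral vanishes.
-/

open MeasureTheory

/-- Standard Gaussian density. -/
noncomputable def stdG (g : ℝ) : ℝ :=
  (Real.sqrt (2 * Real.pi))⁻¹ * Real.exp (-g ^ 2 / 2)

/-- Standard Gaussian cumulative distribution function. -/
noncomputable def Phi (x : ℝ) : ℝ := ∫ u in Set.Iio x, stdG u

/-- Density of the one-dimensional centered Gaussian with variance `v`. -/
noncomputable def gpdf (v x : ℝ) : ℝ :=
  (Real.sqrt (2 * Real.pi * v))⁻¹ * Real.exp (-x ^ 2 / (2 * v))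

lemma integral_eq_zero_of_comp_sub_eq_neg {E : Type*} [NormedAddCommGroup E] [NormedSpace ℝ E]
    {f : ℝ → E} (s : ℝ) (hf : ∀ x, f (s - x) = -f x) : ∫ x, f x = 0 := by
  have h : ∫ x, f x = -∫ x, f x :=
    calc ∫ x, f x = ∫ x, f (s - x) := (integral_sub_left_eq_self f volume s).symm
      _ = -∫ x, f x := by simp_rw [hf]; exact integral_neg f
  have h_two : (2 : ℝ) • ∫ x, f x = 0 := by
    rw [two_smul]; nth_rewrite 2 [h]; exact add_neg_cancel _
  exact (smul_eq_zero.mp h_two).resolve_left two_ne_zero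

lemma stdG_eq_exp (x : ℝ) :
    stdG x = (Real.sqrt (2 * Real.pi))⁻¹ * Real.exp (-(1 / 2) * x ^ 2) := by
  rw [stdG]; ring_nf

lemma integrable_stdG : Integrable stdG := by
  simp_rw [funext stdG_eq_exp]
  exact (integrable_exp_neg_mul_sq (by norm_num)).const_mul _

lemma integral_stdG : ∫ x, stdG x = 1 := by
  simp_rw [stdG_eq_exp]
  rw [integral_const_mul, integral_gaussian, show Real.pi / (1 / 2) = 2 * Real.pi by ring,
    inv_mul_cancel₀ (by positivity)]

lemma stdG_neg (x : ℝ) : stdG (-x) = stdG x := by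
  simp [stdG]

lemma Phi_eq_setIntegral_Iic (x : ℝ) : Phi x = ∫ u in Set.Iic x, stdG u :=
  setIntegral_congr_set Iio_ae_eq_Iic

lemma Phi_neg (x : ℝ) : Phi (-x) = 1 - Phi x := by
  have h_tail : Phi (-x) = ∫ u in Set.Ioi x, stdG u := by
    rw [Phi_eq_setIntegral_Iic, ← integral_comp_neg_Ioi]
    simp_rw [stdG_neg]
  have h_split : (∫ u in Set.Iic x, stdG u) + (∫ u in Set.Ioi x, stdG u) = 1 :=
    integral_stdG ▸ intervalIntegral.integral_Iic_add_Ioi integrable_stdG.integrableOn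
      integrable_stdG.integrableOn
  rw [h_tail, Phi_eq_setIntegral_Iic]
  linarith

lemma one_sub_two_mul_Phi_neg (x : ℝ) : 1 - 2 * Phi (-x) = -(1 - 2 * Phi x) := by
  rw [Phi_neg]; ring

lemma gpdf_pos {v : ℝ} (hv : 0 < v) (x : ℝ) : 0 < gpdf v x := by
  unfold gpdf
  positivity

lemma stdG_eq_mul_gpdf {c : ℝ} (hc : 0 < c) (g : ℝ) : stdG g = c * gpdf (c ^ 2) (c * g) := by
  have h_sqrt : Real.sqrt (2 * Real.pi * c ^ 2) = Real.sqrt (2 * Real.pi) * c := by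
    rw [Real.sqrt_mul (by positivity), Real.sqrt_sq hc.le]
  have h_exp : -(c * g) ^ 2 / (2 * c ^ 2) = -g ^ 2 / 2 := by
    field_simp
  rw [stdG, gpdf, h_sqrt, h_exp, mul_inv]
  field_simp

lemma min_one_div_mul_self {p : ℝ} (hp : 0 < p) (q : ℝ) : min 1 (q / p) * p = min p q := by
  rw [min_mul_of_nonneg _ _ hp.le, one_mul, div_mul_cancel₀ _ hp.ne']

lemma integral_sticky_symmetry {c : ℝ} (hc : 0 < c) (t a : ℝ) :
    ∫ g : ℝ, (1 - 2 * Phi (-(t - 2 * c * g) / (2 * a))) *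
      min 1 (gpdf (c ^ 2) (t - c * g) / gpdf (c ^ 2) (c * g)) * stdG g = 0 := by
  set F : ℝ → ℝ := fun g ↦
    c * ((1 - 2 * Phi (-(t - 2 * c * g) / (2 * a))) *
      min (gpdf (c ^ 2) (c * g)) (gpdf (c ^ 2) (t - c * g)))
  have h_integrand : ∀ g, (1 - 2 * Phi (-(t - 2 * c * g) / (2 * a))) *
      min 1 (gpdf (c ^ 2) (t - c * g) / gpdf (c ^ 2) (c * g)) * stdG g = F g := by
    intro g
    rw [stdG_eq_mul_gpdf hc, mul_left_comm, mul_assoc,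
      min_one_div_mul_self (gpdf_pos (by positivity) _)]
  have h_odd : ∀ g, F (t / c - g) = -F g := by
    intro g
    have h_left : c * (t / c - g) = t - c * g := by field_simp
    have h_arg : -(t - 2 * c * (t / c - g)) / (2 * a) = -(-(t - 2 * c * g) / (2 * a)) := by
      field_simp; ring
    simp only [F, h_left, sub_sub_cancel, h_arg, one_sub_two_mul_Phi_neg]
    rw [min_comm]
    ring
  simp_rw [h_integrand]
  exact integral_eq_zero_of_comp_sub_eq_neg _ h_odd

theorem sticky_symmetry_integral_general (σ γ t a : ℝ)
    (hσ : 0 < σ) (hγ : 0 < γ) :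
    ∫ g : ℝ,
      (1 - 2 * Phi (-(t - 2 * σ * Real.sqrt γ * g) / (2 * a))) *
        min 1 (gpdf (σ ^ 2 * γ) (t - σ * Real.sqrt γ * g) /
          gpdf (σ ^ 2 * γ) (σ * Real.sqrt γ * g)) * stdG g = 0 := by
  have h_var : σ ^ 2 * γ = (σ * Real.sqrt γ) ^ 2 := by
    rw [mul_pow, Real.sq_sqrt hγ.le]
  have h_coef : ∀ g, 2 * σ * Real.sqrt γ * g = 2 * (σ * Real.sqrt γ) * g := fun g ↦ by ring
  simp_rw [h_var, h_coef]
  exact integral_sticky_symmetry (by positivity) t a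

theorem sticky_symmetry_integral (σ γ t a : ℝ)
    (hσ : 0 < σ) (hγ : 0 < γ) (ht : 0 ≤ t) (ha : 0 < a) :
    ∫ g : ℝ,
      (1 - 2 * Phi (-(t - 2 * σ * Real.sqrt γ * g) / (2 * a))) *
        min 1 (gpdf (σ ^ 2 * γ) (t - σ * Real.sqrt γ * g) /
          gpdf (σ ^ 2 * γ) (σ * Real.sqrt γ * g)) * stdG g = 0 :=
  sticky_symmetry_integral_general σ γ t a hσ hγ
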